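/- Let G be a topological group and A a profinite G-group (a compact Hausdorff totally disconnected G-group). Suppose given a family {N_r}_{r∈R}, indexed by a directed poset R, of closed characteristic subgroups of A (subgroups invariant under every continuous automorphism of A) such that ∩_{r∈R} N_r = {1} and N_r ⊆ N_t whenever r ≥ t, and set A_r = A/N_r with the quotient topology and the induced G-action. Then each A_r is a profinite G-group, the natural map A → lim_r A_r is an isomorphism of topological groups commuting with the G-actions, and the induced map Θ : H¹_cts(G,A)_po → lim_r H¹_cts(G,A_r)_po, [a] ↦ ([φ_r ∘ a])_r (where φ_r : A → A_r is the quotient map), is a continuous bijection; if moreover G is a compact Hausdorff space and A is evenly continuous with respect to G, then Θ is a homeomorphism. -/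

import Mathlib

/-- A set `F` of maps `B → A` is evenly continuous. -/
def EvenlyContinuousSet {B A : Type} [TopologicalSpace B] [TopologicalSpace A]
    (F : Set (B → A)) : Prop :=
  ∀ b : B, ∀ a : A, ∀ U ∈ nhds a, ∃ V ∈ nhds b, ∃ W ∈ nhds a,
    ∀ f ∈ F, f b ∈ W → ∀ v ∈ V, f v ∈ U

/-- `Z¹_cts(G,A)_po`: continuous 1-cocycles with the point-open topology. -/
abbrev Z1cts {G A : Type} [Group G] [TopologicalSpace G] [Group A] [TopologicalSpace A]
    (ac : G → A → A) : Type :=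
  {a : G → A // Continuous a ∧ ∀ s t : G, a (s * t) = a s * ac s (a t)}

/-- The cohomology relation on `Z¹_cts(G,A)_po`. -/
def Cohomologous {G A : Type} [Group G] [TopologicalSpace G] [Group A]
    [TopologicalSpace A] (ac : G → A → A) (a b : Z1cts ac) : Prop :=
  ∃ x : A, ∀ s : G, b.val s = x⁻¹ * a.val s * ac s x

/-- Continuous 1-cocycles with values in a (quotient) space `Q` equipped with a
multiplication `mulq` and a `G`-action `acq`. -/
abbrev Z1q {G : Type} [Group G] [TopologicalSpace G] {Q : Type} [TopologicalSpace Q]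
    (mulq : Q → Q → Q) (acq : G → Q → Q) : Type :=
  {b : G → Q // Continuous b ∧ ∀ s t : G, b (s * t) = mulq (b s) (acq s (b t))}

/-- The cohomology relation on `Z1q`. -/
def Cohq {G : Type} [Group G] [TopologicalSpace G] {Q : Type} [TopologicalSpace Q]
    (mulq : Q → Q → Q) (invq : Q → Q) (acq : G → Q → Q) (b b' : Z1q mulq acq) :
    Prop :=
  ∃ x : Q, ∀ s : G, b'.val s = mulq (invq x) (mulq (b.val s) (acq s x))

/-!
Everything rests on one compactness principle: in a compact space a directed, decreasing family
of nonempty closed sets has nonempty intersection. As the `N r` are closed with trivial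
intersection and `A` is compact, `A` is a closed subspace of `∏ r, A ⧸ N r`; this gives
`A ≅ lim A ⧸ N r`, and a function into `A` is continuous, resp. a cocycle, once all its
reductions are.

For `Θ`, a class in `H¹(G, A ⧸ N r)` is the orbit of a cocycle under the compact group `A ⧸ N r`,
so the functions `G → A` reducing to a representative of it form a closed subset of the compact
space `G → A`. Given a compatible family of classes these sets decrease with `r`, and a common
point is a cocycle representing the family: `Θ` is onto. Injectivity, and closedness of `Θ`
when `Z¹` is compact (even continuity makes `Z¹` closed in `G → A`), apply the same principle
to the orbit of one cocycle, resp. to the saturated compact set of cocycles over a closed set.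
-/

open Topology

section CharacteristicSubgroup

variable {A : Type*} [Group A] [TopologicalSpace A] {N : Subgroup A}

theorem Subgroup.normal_of_forall_continuous_mulEquiv [IsTopologicalGroup A]
    (hN : ∀ ψ : A ≃* A, Continuous ψ → Continuous ψ.symm → ∀ x ∈ N, ψ x ∈ N) : N.Normal :=
  ⟨fun n hn g => by
    simpa using hN (MulAut.conj g) ((continuous_const_mul g).mul continuous_const)
      ((continuous_const_mul g⁻¹).mul continuous_const) n hn⟩

theorem Subgroup.smul_mem_of_forall_continuous_mulEquiv {G : Type*} [Group G]
    [MulDistribMulAction G A] [TopologicalSpace G] [ContinuousConstSMul G A]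
    (hN : ∀ ψ : A ≃* A, Continuous ψ → Continuous ψ.symm → ∀ x ∈ N, ψ x ∈ N)
    (g : G) {x : A} (hx : x ∈ N) : g • x ∈ N :=
  hN (MulDistribMulAction.toMulEquiv A g) (continuous_const_smul g)
    (continuous_const_smul g⁻¹) x hx

end CharacteristicSubgroup

theorem MulAction.QuotientAction.of_smul_mem {G A : Type*} [Group G] [Group A]
    [MulDistribMulAction G A] {N : Subgroup A} (hN : ∀ (g : G) {x : A}, x ∈ N → g • x ∈ N) :
    MulAction.QuotientAction G N :=
  ⟨fun g a a' h => by simpa only [smul_inv', smul_mul'] using hN g h⟩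

namespace QuotientGroup

variable {G A : Type*} [Group G] [Group A] [MulDistribMulAction G A]
  (N : Subgroup A) [N.Normal] [MulAction.QuotientAction G N]

instance mulDistribMulAction : MulDistribMulAction G (A ⧸ N) where
  smul_mul g := by
    rintro ⟨x⟩ ⟨y⟩
    exact congrArg ((↑) : A → A ⧸ N) (smul_mul' g x y)
  smul_one g := congrArg ((↑) : A → A ⧸ N) (smul_one g)

instance continuousSMul [TopologicalSpace G] [TopologicalSpace A] [IsTopologicalGroup A]
    [ContinuousSMul G A] : ContinuousSMul G (A ⧸ N) where
  continuous_smul := by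
    rw [← (IsOpenQuotientMap.id.prodMap isOpenQuotientMap_mk).continuous_comp_iff]
    exact continuous_mk.comp continuous_smul

end QuotientGroup

open Pointwise in
instance QuotientGroup.totallySeparatedSpace {A : Type*} [Group A] [TopologicalSpace A]
    [IsTopologicalGroup A] [CompactSpace A] [TotallyDisconnectedSpace A] (N : Subgroup A)
    [IsClosed (N : Set A)] : TotallySeparatedSpace (A ⧸ N) := by
  refine totallySeparatedSpace_iff_exists_isClopen.mpr ?_
  -- `a` and `b` are separated by a coset of the open subgroup `V ⊔ N`, where `V` is an open
  -- normal subgroup avoiding the closed coset `(a⁻¹ * b) • N`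
  rintro ⟨a⟩ ⟨b⟩ hab
  have hc : a⁻¹ * b ∉ N := fun h => hab (QuotientGroup.eq.mpr h)
  obtain ⟨V, hV⟩ := ProfiniteGrp.exist_openNormalSubgroup_sub_open_nhds_of_one
    ((IsClosed.smul ‹IsClosed (N : Set A)› (a⁻¹ * b)).isOpen_compl)
    (fun h => hc (by
      rwa [Set.mem_smul_set_iff_inv_smul_mem, smul_eq_mul, mul_one, SetLike.mem_coe,
        inv_mem_iff] at h))
  set H : Subgroup A := V.toSubgroup ⊔ N
  have hH : IsOpen (H : Set A) := Subgroup.isOpen_mono le_sup_left V.isOpen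
  have hcH : a⁻¹ * b ∉ H := by
    rw [Subgroup.mem_sup_of_normal_left]
    rintro ⟨v, hv, n, hn, hvn⟩
    exact hV hv ⟨n⁻¹, inv_mem hn, by simp [← hvn]⟩
  refine ⟨(↑) '' (a • (H : Set A)), ⟨?_, QuotientGroup.isOpenMap_coe _ (hH.smul a)⟩,
    ⟨a, ⟨1, H.one_mem, mul_one a⟩, rfl⟩, ?_⟩
  · exact (((Subgroup.isClosed_of_isOpen H hH).smul a).isCompact.image
      QuotientGroup.continuous_mk).isClosed
  · rintro ⟨_, ⟨h, hh, rfl⟩, hhb⟩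
    refine hcH ?_
    have : (a * h)⁻¹ * b ∈ H := (le_sup_right : N ≤ H) (QuotientGroup.eq.mp hhb)
    simpa [mul_assoc] using H.mul_mem hh this

section DirectedIntersection

variable {X R : Type*} [TopologicalSpace X] [Preorder R] [IsDirected R (· ≤ ·)]

theorem IsCompact.inter_iInter_nonempty_of_antitone {s : Set X} (hs : IsCompact s)
    (hs₀ : s.Nonempty) {C : R → Set X} (hC : Antitone C) (hcl : ∀ r, IsClosed (C r))
    (hne : ∀ r, (s ∩ C r).Nonempty) : (s ∩ ⋂ r, C r).Nonempty := by
  cases isEmpty_or_nonempty R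
  · simpa using hs₀
  · by_contra h
    obtain ⟨r, hr⟩ := hs.elim_directed_family_closed C hcl
      (Set.not_nonempty_iff_eq_empty.mp h) hC.directed_ge
    exact (hne r).ne_empty hr

theorem IsCompact.mem_of_forall_mem_image {Y : R → Type*} [∀ r, TopologicalSpace (Y r)]
    [∀ r, T1Space (Y r)] {f : ∀ r, X → Y r} (hf : ∀ r, Continuous (f r))
    (hcompat : ∀ ⦃r t⦄, t ≤ r → ∀ x x', f r x = f r x' → f t x = f t x')
    (hinj : ∀ x x', (∀ r, f r x = f r x') → x = x') {D : Set X} (hD : IsCompact D)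
    (hD₀ : D.Nonempty) {x : X} (hx : ∀ r, f r x ∈ f r '' D) : x ∈ D := by
  obtain ⟨y, hyD, hy⟩ := hD.inter_iInter_nonempty_of_antitone hD₀
    (C := fun r => f r ⁻¹' {f r x}) (fun r t htr y hy => hcompat htr y x hy)
    (fun r => isClosed_singleton.preimage (hf r))
    (fun r => let ⟨y, hyD, hy⟩ := hx r; ⟨y, hyD, hy⟩)
  rwa [← hinj y x fun r => Set.mem_iInter.mp hy r]

end DirectedIntersection

namespace QuotientGroup

theorem mk_eq_mk_of_le {A : Type*} [Group A] {M M' : Subgroup A} (hle : M ≤ M')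
    {x y : A} (h : (x : A ⧸ M) = y) : (x : A ⧸ M') = y :=
  QuotientGroup.eq.mpr (hle (QuotientGroup.eq.mp h))

theorem eq_of_forall_mk_eq {A ι : Type*} [Group A] {N : ι → Subgroup A}
    (hN : ⋂ i, (N i : Set A) = {1}) {x y : A} (h : ∀ i, (x : A ⧸ N i) = y) : x = y := by
  have hxy : x⁻¹ * y ∈ ⋂ i, (N i : Set A) :=
    Set.mem_iInter.mpr fun i => QuotientGroup.eq.mp (h i)
  rwa [hN, Set.mem_singleton_iff, inv_mul_eq_one] at hxy

variable {A R : Type} [Group A] [TopologicalSpace A] [IsTopologicalGroup A]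
  {N : R → Subgroup A} [∀ r, IsClosed (N r : Set A)]

theorem mem_of_forall_exists_mk_eq [Preorder R] [IsDirected R (· ≤ ·)] (hN : Antitone N)
    (hN₁ : ⋂ r, (N r : Set A) = {1}) {ι : Type*} {D : Set (ι → A)} (hD : IsCompact D)
    (hD₀ : D.Nonempty) {f : ι → A} (hf : ∀ r, ∃ g ∈ D, ∀ i, (g i : A ⧸ N r) = f i) : f ∈ D :=
  hD.mem_of_forall_mem_image (f := fun r (g : ι → A) i => (g i : A ⧸ N r))
    (fun _ => continuous_pi fun i => continuous_mk.comp (continuous_apply i))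
    (fun _ _ htr _ _ h => funext fun i => mk_eq_mk_of_le (hN htr) (congrFun h i))
    (fun _ _ h => funext fun i => eq_of_forall_mk_eq hN₁ fun r => congrFun (h r) i) hD₀
    fun r => let ⟨g, hgD, hg⟩ := hf r; ⟨g, hgD, funext hg⟩

variable [CompactSpace A]

theorem isClosedEmbedding_pi_mk (hN : ⋂ r, (N r : Set A) = {1}) :
    IsClosedEmbedding fun (x : A) r => (x : A ⧸ N r) :=
  (continuous_pi fun _ => continuous_mk).isClosedEmbedding fun _ _ h =>
    eq_of_forall_mk_eq hN (congrFun h)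

theorem continuous_of_forall_continuous_mk (hN : ⋂ r, (N r : Set A) = {1})
    {Y : Type*} [TopologicalSpace Y] {f : Y → A}
    (hf : ∀ r, Continuous fun y => (f y : A ⧸ N r)) : Continuous f :=
  (isClosedEmbedding_pi_mk hN).isEmbedding.continuous_iff.mpr (continuous_pi hf)

def toLimit [Preorder R] (hN : Antitone N) (x : A) :
    {h : ∀ r, A ⧸ N r // ∀ (r t : R), t ≤ r → ∀ y : A, h r = y → h t = y} :=
  ⟨fun _ => x, fun _ _ htr _ hy => mk_eq_mk_of_le (hN htr) hy⟩

theorem toLimit_bijective [Preorder R] [IsDirected R (· ≤ ·)] (hN : Antitone N)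
    (hN₁ : ⋂ r, (N r : Set A) = {1}) : Function.Bijective (toLimit hN) := by
  refine ⟨fun x y h => eq_of_forall_mk_eq hN₁ (congrFun (congrArg Subtype.val h)), ?_⟩
  rintro ⟨h, hh⟩
  obtain ⟨x, -, hx⟩ := isCompact_univ.inter_iInter_nonempty_of_antitone Set.univ_nonempty
    (C := fun r => ((↑) : A → A ⧸ N r) ⁻¹' {h r})
    (fun t r htr x hx => (hh r t htr x hx.symm).symm)
    (fun r => isClosed_singleton.preimage continuous_mk)
    (fun r => let ⟨x, hx⟩ := mk_surjective (h r); ⟨x, trivial, hx⟩)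
  exact ⟨x, Subtype.ext (funext fun r => Set.mem_iInter.mp hx r)⟩

theorem isHomeomorph_toLimit [Preorder R] [IsDirected R (· ≤ ·)] (hN : Antitone N)
    (hN₁ : ⋂ r, (N r : Set A) = {1}) : IsHomeomorph (toLimit hN) :=
  isHomeomorph_iff_continuous_bijective.mpr
    ⟨(continuous_pi fun _ => continuous_mk).subtype_mk _, toLimit_bijective hN hN₁⟩

end QuotientGroup

section Cocycle

variable {G Q : Type} [Group G] [TopologicalSpace G] [Group Q] [TopologicalSpace Q]
  [MulDistribMulAction G Q]

-- For `Q = A` this is definitionally `Z1cts (· • ·)`, so the two are used interchangeably.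
variable (G Q) in
abbrev Z1 : Type := Z1q (fun x y : Q => x * y) (fun (s : G) (x : Q) => s • x)

variable (G Q) in
abbrev H1 : Type :=
  Quot (Cohq (fun x y : Q => x * y) (fun x : Q => x⁻¹) (fun (s : G) (x : Q) => s • x))

theorem equivalence_cohq : Equivalence
    (Cohq (fun x y : Q => x * y) (fun x : Q => x⁻¹) (fun (s : G) (x : Q) => s • x)) where
  refl _ := ⟨1, fun s => by simp⟩
  symm := fun ⟨y, hy⟩ => ⟨y⁻¹, fun s => by simp only [hy, smul_inv']; group⟩
  trans := fun ⟨y, hy⟩ ⟨z, hz⟩ =>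
    ⟨y * z, fun s => by simp only [hz, hy, smul_mul', mul_inv_rev]; group⟩

variable [IsTopologicalGroup Q] [ContinuousSMul G Q]

def Z1.twist (b : Z1 G Q) (y : Q) : Z1 G Q :=
  ⟨fun s => y⁻¹ * (b.val s * s • y), by have := b.2.1; fun_prop, fun s t => by
    simp only [b.2.2 s t, smul_mul', smul_inv', mul_smul]
    group⟩

theorem Z1.continuous_twist : Continuous fun p : Z1 G Q × Q => p.1.twist p.2 :=
  continuous_induced_rng.mpr <| continuous_pi fun s =>
    continuous_snd.inv.mul (((continuous_apply s).comp (continuous_subtype_val.comp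
      continuous_fst)).mul ((continuous_const_smul s).comp continuous_snd))

theorem Z1.isCompact_range_twist [CompactSpace Q] (b : Z1 G Q) :
    IsCompact (Set.range fun y => (b.twist y).val) :=
  isCompact_range (continuous_subtype_val.comp
    (Z1.continuous_twist.comp (continuous_const.prodMk continuous_id)))

theorem Z1.mk_eq_mk_iff {b b' : Z1 G Q} :
    (Quot.mk _ b : H1 G Q) = Quot.mk _ b' ↔ ∃ y, b.twist y = b' := by
  rw [equivalence_cohq.quot_mk_eq_iff]
  refine exists_congr fun y => ?_
  rw [Subtype.ext_iff, funext_iff]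
  exact forall_congr' fun s => eq_comm

theorem Z1.cohomologous_iff {a a' : Z1 G Q} :
    Cohomologous (fun (s : G) (x : Q) => s • x) a a' ↔ ∃ x, a.twist x = a' := by
  refine exists_congr fun x => ?_
  rw [Subtype.ext_iff, funext_iff]
  exact forall_congr' fun s => by rw [eq_comm, mul_assoc]; rfl

end Cocycle

section Reduction

variable {G A : Type} [Group G] [TopologicalSpace G] [Group A] [TopologicalSpace A]
  [MulDistribMulAction G A] (M : Subgroup A) [M.Normal] [MulAction.QuotientAction G M]

def Z1.reduce (a : Z1 G A) : Z1 G (A ⧸ M) :=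
  ⟨fun s => a.val s, continuous_quot_mk.comp a.2.1, fun s t => by
    simp only [a.2.2 s t, QuotientGroup.mk_mul, MulAction.Quotient.smul_mk]⟩

theorem Z1.continuous_reduce : Continuous (Z1.reduce (G := G) M) :=
  continuous_induced_rng.mpr <| continuous_pi fun s =>
    continuous_quot_mk.comp ((continuous_apply s).comp continuous_subtype_val)

variable [IsTopologicalGroup A] [ContinuousSMul G A]

theorem Z1.reduce_twist (a : Z1 G A) (x : A) :
    (a.twist x).reduce M = (a.reduce M).twist (x : A ⧸ M) :=
  Subtype.ext <| funext fun s => by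
    simp only [Z1.reduce, Z1.twist, QuotientGroup.mk_mul, QuotientGroup.mk_inv,
      MulAction.Quotient.smul_mk]

theorem Z1.mk_reduce_eq_mk_iff {a : Z1 G A} {b : Z1 G (A ⧸ M)} :
    (Quot.mk _ (a.reduce M) : H1 G (A ⧸ M)) = Quot.mk _ b ↔
      ∃ x : A, (a.twist x).reduce M = b := by
  simp only [Z1.mk_eq_mk_iff, Z1.reduce_twist]
  exact ⟨fun ⟨y, hy⟩ => ⟨y.out, by rwa [QuotientGroup.out_eq']⟩, fun ⟨x, hx⟩ => ⟨x, hx⟩⟩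

theorem Z1.exists_mk_reduce_eq_of_le {M' : Subgroup A} [M'.Normal]
    [MulAction.QuotientAction G M'] (hle : M ≤ M') {a : Z1 G A} {b : Z1 G (A ⧸ M)}
    (hb : (Quot.mk _ (a.reduce M) : H1 G (A ⧸ M)) = Quot.mk _ b) :
    ∃ c : Z1 G (A ⧸ M'), (∀ (s : G) (x : A), b.val s = x → c.val s = x) ∧
      (Quot.mk _ (a.reduce M') : H1 G (A ⧸ M')) = Quot.mk _ c := by
  obtain ⟨x, rfl⟩ := (Z1.mk_reduce_eq_mk_iff M).mp hb
  exact ⟨(a.twist x).reduce M', fun _ _ hy => QuotientGroup.mk_eq_mk_of_le hle hy,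
    (Z1.mk_reduce_eq_mk_iff M').mpr ⟨x, rfl⟩⟩

theorem Z1.mk_preimage_image_reduce
    (C : Set (Quot (Cohomologous (fun (s : G) (x : A) => s • x)))) :
    Quot.mk _ ⁻¹' (Quot.mk _ '' (Z1.reduce M '' (Quot.mk _ ⁻¹' C)) : Set (H1 G (A ⧸ M))) =
      Z1.reduce M '' (Quot.mk _ ⁻¹' C) := by
  refine subset_antisymm ?_ (Set.subset_preimage_image _ _)
  rintro b ⟨_, ⟨a, ha, rfl⟩, hab⟩
  obtain ⟨x, rfl⟩ := (Z1.mk_reduce_eq_mk_iff M).mp hab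
  refine ⟨a.twist x, ?_, rfl⟩
  rwa [Set.mem_preimage, ← Quot.sound (Z1.cohomologous_iff.mpr ⟨x, rfl⟩)]

theorem Z1.isClosed_image_reduce [CompactSpace (Z1 G A)] [IsClosed (M : Set A)]
    {C : Set (Quot (Cohomologous (fun (s : G) (x : A) => s • x)))} (hC : IsClosed C) :
    IsClosed (Quot.mk _ '' (Z1.reduce M '' (Quot.mk _ ⁻¹' C)) : Set (H1 G (A ⧸ M))) := by
  rw [← isQuotientMap_quot_mk.isClosed_preimage, Z1.mk_preimage_image_reduce]
  exact ((hC.preimage continuous_quot_mk).isCompact.image (Z1.continuous_reduce M)).isClosed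

end Reduction

theorem EvenlyContinuousSet.isClosed_setOf_continuous {B A : Type} [TopologicalSpace B]
    [TopologicalSpace A] [RegularSpace A] (hec : EvenlyContinuousSet {f : B → A | Continuous f}) :
    IsClosed {f : B → A | Continuous f} := by
  refine isClosed_of_closure_subset fun f hf => continuous_iff_continuousAt.mpr fun b U hU => ?_
  obtain ⟨U', hU', hU'cl, hU'U⟩ := exists_mem_nhds_isClosed_subset hU
  obtain ⟨V, hV, W, hW, hVW⟩ := hec b (f b) U' hU'
  -- `f v` is approximated by `g v` with `g` continuous and `g b ∈ W`, so it lies in closed `U'`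
  refine Filter.mem_map.mpr <| Filter.mem_of_superset hV fun v hv =>
    hU'U <| hU'cl.closure_subset <| mem_closure_iff_nhds.mpr fun O hO => ?_
  obtain ⟨g, ⟨hgb, hgv⟩, hg⟩ := mem_closure_iff_nhds.mp hf _ <| Filter.inter_mem
    ((continuous_apply b).continuousAt.preimage_mem_nhds hW)
    ((continuous_apply v).continuousAt.preimage_mem_nhds hO)
  exact ⟨g v, hgv, hVW g hg hgb v hv⟩

theorem Z1.compactSpace_of_evenlyContinuous {G A : Type} [Group G] [TopologicalSpace G]
    [Group A] [TopologicalSpace A] [ContinuousMul A] [CompactSpace A] [T2Space A]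
    [MulDistribMulAction G A] [ContinuousConstSMul G A]
    (hec : EvenlyContinuousSet {f : G → A | Continuous f}) : CompactSpace (Z1 G A) := by
  have hZ : IsClosed {f : G → A | Continuous f ∧ ∀ s t, f (s * t) = f s * s • f t} := by
    simp only [Set.ofPred_and, Set.ofPred_forall]
    exact hec.isClosed_setOf_continuous.inter <| isClosed_iInter fun s => isClosed_iInter fun t =>
      isClosed_eq (continuous_apply _)
        ((continuous_apply s).mul ((continuous_const_smul s).comp (continuous_apply t)))
  exact isCompact_iff_compactSpace.mp hZ.isCompact

section CohomologyLimit

variable {G A R : Type} [Group G] [TopologicalSpace G] [Group A] [TopologicalSpace A]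
  [IsTopologicalGroup A] [MulDistribMulAction G A] {N : R → Subgroup A} [∀ r, (N r).Normal]
  [∀ r, MulAction.QuotientAction G (N r)]

theorem Z1.exists_val_eq_of_forall_reduce [CompactSpace A] [∀ r, IsClosed (N r : Set A)]
    (hN₁ : ⋂ r, (N r : Set A) = {1}) {f : G → A}
    (hf : ∀ r, ∃ c : Z1 G (A ⧸ N r), ∀ s, c.val s = f s) : ∃ a : Z1 G A, a.val = f := by
  choose c hc using hf
  refine ⟨⟨f, QuotientGroup.continuous_of_forall_continuous_mk hN₁ fun r => ?_,
    fun s t => QuotientGroup.eq_of_forall_mk_eq hN₁ fun r => ?_⟩, rfl⟩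
  · exact funext (hc r) ▸ (c r).2.1
  · have h := (c r).2.2 s t
    simp only [hc] at h
    rw [h, QuotientGroup.mk_mul, MulAction.Quotient.smul_mk]

variable [ContinuousSMul G A] [Preorder R]

def H1.toLimit (hN : Antitone N) : Quot (Cohomologous (fun (s : G) (x : A) => s • x)) →
    {h : ∀ r, H1 G (A ⧸ N r) // ∀ (r t : R), t ≤ r → ∀ b : Z1 G (A ⧸ N r), h r = Quot.mk _ b →
      ∃ c : Z1 G (A ⧸ N t), (∀ (s : G) (x : A), b.val s = x → c.val s = x) ∧
        h t = Quot.mk _ c} :=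
  Quot.lift (fun a => ⟨fun r => Quot.mk _ (Z1.reduce (N r) a),
      fun _ _ htr _ hb => Z1.exists_mk_reduce_eq_of_le (N _) (hN htr) hb⟩) fun a a' h => by
    obtain ⟨x, rfl⟩ := Z1.cohomologous_iff.mp h
    exact Subtype.ext (funext fun r => (Z1.mk_reduce_eq_mk_iff (N r)).mpr ⟨x, rfl⟩)

theorem H1.continuous_toLimit (hN : Antitone N) : Continuous (H1.toLimit (G := G) hN) :=
  continuous_quot_lift _ <|
    (continuous_pi fun r => continuous_quot_mk.comp (Z1.continuous_reduce (N r))).subtype_mk _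

variable [CompactSpace A] [∀ r, IsClosed (N r : Set A)] [IsDirected R (· ≤ ·)]

theorem H1.toLimit_injective (hN : Antitone N) (hN₁ : ⋂ r, (N r : Set A) = {1}) :
    Function.Injective (H1.toLimit (G := G) hN) := by
  rintro ⟨a⟩ ⟨a'⟩ h
  obtain ⟨x, hx⟩ : a'.val ∈ Set.range fun x => (Z1.twist a x).val := by
    refine QuotientGroup.mem_of_forall_exists_mk_eq hN hN₁ (Z1.isCompact_range_twist a)
      (Set.range_nonempty _) fun r => ?_
    obtain ⟨x, hx⟩ := (Z1.mk_reduce_eq_mk_iff (N r)).mp (congrFun (congrArg Subtype.val h) r)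
    exact ⟨_, ⟨x, rfl⟩, fun s => congrFun (congrArg Subtype.val hx) s⟩
  exact Quot.sound (Z1.cohomologous_iff.mpr ⟨x, Subtype.ext hx⟩)

theorem H1.toLimit_surjective (hN : Antitone N) (hN₁ : ⋂ r, (N r : Set A) = {1}) :
    Function.Surjective (H1.toLimit (G := G) hN) := by
  rintro ⟨h, hh⟩
  choose b hb using fun r => Quot.exists_rep (h r)
  set lifts : R → Set (G → A) := fun r => (fun f s => (f s : A ⧸ N r)) ⁻¹'
    Set.range fun y => (Z1.twist (b r) y).val
  have lifts_antitone : Antitone lifts := by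
    rintro t r htr f ⟨y, hy⟩
    obtain ⟨c, hc, hct⟩ :=
      hh r t htr (Z1.twist (b r) y) ((hb r).symm.trans (Z1.mk_eq_mk_iff.mpr ⟨y, rfl⟩))
    obtain ⟨z, rfl⟩ := Z1.mk_eq_mk_iff.mp ((hb t).trans hct)
    exact ⟨z, funext fun s => hc s (f s) (congrFun hy s)⟩
  have lifts_closed (r : R) : IsClosed (lifts r) :=
    (Z1.isCompact_range_twist (b r)).isClosed.preimage
      (continuous_pi fun s => QuotientGroup.continuous_mk.comp (continuous_apply s))
  have lifts_nonempty (r : R) : (Set.univ ∩ lifts r).Nonempty :=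
    ⟨fun s => ((b r).val s).out, trivial, 1, funext fun s => by simp [Z1.twist]⟩
  obtain ⟨f, -, hf⟩ := isCompact_univ.inter_iInter_nonempty_of_antitone Set.univ_nonempty
    lifts_antitone lifts_closed lifts_nonempty
  have hfr : ∀ r, ∃ y, (Z1.twist (b r) y).val = fun s => (f s : A ⧸ N r) :=
    fun r => Set.mem_iInter.mp hf r
  obtain ⟨a, rfl⟩ := Z1.exists_val_eq_of_forall_reduce hN₁ fun r =>
    let ⟨y, hy⟩ := hfr r; ⟨_, congrFun hy⟩
  refine ⟨Quot.mk _ a, Subtype.ext (funext fun r => ?_)⟩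
  obtain ⟨y, hy⟩ := hfr r
  show _ = h r
  rw [← hb r]
  exact (Z1.mk_eq_mk_iff.mpr ⟨y, Subtype.ext hy⟩).symm

theorem H1.image_toLimit (hN : Antitone N) (hN₁ : ⋂ r, (N r : Set A) = {1})
    [CompactSpace (Z1 G A)] {C : Set (Quot (Cohomologous (fun (s : G) (x : A) => s • x)))}
    (hC : IsClosed C) (hC₀ : C.Nonempty) :
    H1.toLimit hN '' C =
      ⋂ r, (fun h => h.val r) ⁻¹' (Quot.mk _ '' (Z1.reduce (N r) '' (Quot.mk _ ⁻¹' C))) := by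
  refine subset_antisymm ?_ fun h hh => ?_
  · rintro _ ⟨⟨a⟩, ha, rfl⟩
    exact Set.mem_iInter.mpr fun r => ⟨_, ⟨a, ha, rfl⟩, rfl⟩
  obtain ⟨⟨a⟩, rfl⟩ := H1.toLimit_surjective hN hN₁ h
  obtain ⟨q, hq⟩ := hC₀
  obtain ⟨a₀, rfl⟩ := Quot.exists_rep q
  obtain ⟨a', ha', ha'a⟩ : a.val ∈ Subtype.val '' (Quot.mk _ ⁻¹' C) := by
    refine QuotientGroup.mem_of_forall_exists_mk_eq hN hN₁
      ((hC.preimage continuous_quot_mk).isCompact.image continuous_subtype_val)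
      ⟨a₀.val, a₀, hq, rfl⟩ fun r => ?_
    have hr : Z1.reduce (N r) a ∈ Z1.reduce (N r) '' (Quot.mk _ ⁻¹' C) := by
      rw [← Z1.mk_preimage_image_reduce]
      exact Set.mem_iInter.mp hh r
    obtain ⟨a', ha', ha'a⟩ := hr
    exact ⟨a'.val, ⟨a', ha', rfl⟩, fun s => congrFun (congrArg Subtype.val ha'a) s⟩
  exact ⟨Quot.mk _ a, Subtype.ext ha'a ▸ ha', rfl⟩

theorem H1.isHomeomorph_toLimit [T2Space A] (hN : Antitone N) (hN₁ : ⋂ r, (N r : Set A) = {1})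
    (hec : EvenlyContinuousSet {f : G → A | Continuous f}) :
    IsHomeomorph (H1.toLimit (G := G) hN) := by
  have := Z1.compactSpace_of_evenlyContinuous hec
  refine isHomeomorph_iff_continuous_isClosedMap_bijective.mpr ⟨H1.continuous_toLimit hN,
    fun C hC => ?_, H1.toLimit_injective hN hN₁, H1.toLimit_surjective hN hN₁⟩
  rcases C.eq_empty_or_nonempty with rfl | hC₀
  · simp
  rw [H1.image_toLimit hN hN₁ hC hC₀]
  exact isClosed_iInter fun r => (Z1.isClosed_image_reduce (N r) hC).preimage
    ((continuous_apply r).comp continuous_subtype_val)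

end CohomologyLimit

theorem stmt_13_general
    {G : Type} [Group G] [TopologicalSpace G]
    {A : Type} [Group A] [TopologicalSpace A] [IsTopologicalGroup A]
    [CompactSpace A] [T2Space A] [TotallyDisconnectedSpace A]
    (ac : G → A → A)
    (hac : Continuous fun p : G × A => ac p.1 p.2)
    (hone : ∀ x : A, ac 1 x = x)
    (hcomp : ∀ (s t : G) (x : A), ac (s * t) x = ac s (ac t x))
    (hdist : ∀ (s : G) (x y : A), ac s (x * y) = ac s x * ac s y)
    {R : Type} [PartialOrder R] [IsDirected R (· ≤ ·)]
    (N : R → Subgroup A)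
    (hNclosed : ∀ r, IsClosed (N r : Set A))
    (hNchar : ∀ r (ψ : A ≃* A), Continuous ψ → Continuous ψ.symm →
      ∀ x ∈ N r, ψ x ∈ N r)
    (hNinter : (⋂ r, (N r : Set A)) = {1})
    (hNmono : ∀ (r t : R), t ≤ r → N r ≤ N t) :
    ∃ (mul : ∀ r, A ⧸ N r → A ⧸ N r → A ⧸ N r)
      (inv : ∀ r, A ⧸ N r → A ⧸ N r)
      (acq : ∀ r, G → A ⧸ N r → A ⧸ N r),
      -- the quotient structure is the one induced from `A`
      (∀ r (x y : A), mul r (QuotientGroup.mk x) (QuotientGroup.mk y) =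
        QuotientGroup.mk (x * y)) ∧
      (∀ r (x : A), inv r (QuotientGroup.mk x) = QuotientGroup.mk x⁻¹) ∧
      (∀ r (s : G) (x : A), acq r s (QuotientGroup.mk x) =
        QuotientGroup.mk (ac s x)) ∧
      -- each `A_r = A/N_r` is a profinite `G`-group
      (∀ r, CompactSpace (A ⧸ N r) ∧ T2Space (A ⧸ N r) ∧
        TotallyDisconnectedSpace (A ⧸ N r) ∧
        Continuous (fun p : (A ⧸ N r) × (A ⧸ N r) => mul r p.1 p.2) ∧
        Continuous (inv r) ∧
        Continuous (fun p : G × (A ⧸ N r) => acq r p.1 p.2) ∧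
        (∀ (s : G) (x y : A ⧸ N r), acq r s (mul r x y) =
          mul r (acq r s x) (acq r s y)) ∧
        (∀ x : A ⧸ N r, acq r 1 x = x) ∧
        (∀ (s t : G) (x : A ⧸ N r), acq r (s * t) x = acq r s (acq r t x))) ∧
      -- the natural map `A → lim_r A_r` is an isomorphism of topological groups
      -- commuting with the `G`-actions
      (∃ Φ : A → {h : ∀ r, A ⧸ N r // ∀ (r t : R) (hle : t ≤ r) (x : A),
            h r = QuotientGroup.mk x → h t = QuotientGroup.mk x},
        (∀ (x : A) (r : R), (Φ x).val r = QuotientGroup.mk x) ∧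
        Function.Bijective Φ ∧ IsHomeomorph Φ ∧
        (∀ (x y : A) (r : R), (Φ (x * y)).val r =
          mul r ((Φ x).val r) ((Φ y).val r)) ∧
        (∀ (s : G) (x : A) (r : R), (Φ (ac s x)).val r = acq r s ((Φ x).val r))) ∧
      -- the induced map `Θ : H¹_cts(G,A)_po → lim_r H¹_cts(G,A_r)_po`
      (∃ Θ : Quot (Cohomologous ac) →
          {h : ∀ r, Quot (Cohq (mul r) (inv r) (acq r)) //
            ∀ (r t : R) (hle : t ≤ r) (b : Z1q (mul r) (acq r)),
              h r = Quot.mk _ b →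
              ∃ c : Z1q (mul t) (acq t),
                (∀ (s : G) (x : A), b.val s = QuotientGroup.mk x →
                  c.val s = QuotientGroup.mk x) ∧
                h t = Quot.mk _ c},
        -- `Θ` is given by `[a] ↦ ([φ_r ∘ a])_r`
        (∀ (a : Z1cts ac) (r : R), ∃ c : Z1q (mul r) (acq r),
          (∀ s : G, c.val s = QuotientGroup.mk (a.val s)) ∧
          (Θ (Quot.mk _ a)).val r = Quot.mk _ c) ∧
        Continuous Θ ∧
        Function.Bijective Θ ∧
        (CompactSpace G → T2Space G →
          EvenlyContinuousSet {f : G → A | Continuous f} → IsHomeomorph Θ)) := by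
  let : MulDistribMulAction G A :=
    { smul := ac, one_smul := hone, mul_smul := hcomp, smul_mul := hdist
      smul_one := fun s => (by simpa using hdist s 1 1 : ac s 1 = 1) }
  have : ContinuousSMul G A := ⟨hac⟩
  have : ∀ r, (N r).Normal := fun r => Subgroup.normal_of_forall_continuous_mulEquiv (hNchar r)
  have : ∀ r, MulAction.QuotientAction G (N r) := fun r =>
    .of_smul_mem fun g _ hx => Subgroup.smul_mem_of_forall_continuous_mulEquiv (hNchar r) g hx
  have hN : Antitone N := fun t r htr => hNmono r t htr
  refine ⟨fun r x y => x * y, fun r x => x⁻¹, fun r s x => s • x, fun _ _ _ => rfl,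
    fun _ _ => rfl, fun _ _ _ => rfl, fun r => ⟨inferInstance, inferInstance, inferInstance,
      continuous_mul, continuous_inv, continuous_smul, smul_mul', one_smul G, mul_smul⟩,
    ⟨QuotientGroup.toLimit hN, fun _ _ => rfl, QuotientGroup.toLimit_bijective hN hNinter,
      QuotientGroup.isHomeomorph_toLimit hN hNinter, fun _ _ _ => rfl, fun _ _ _ => rfl⟩,
    ⟨H1.toLimit hN, fun a r => ⟨Z1.reduce (N r) a, fun _ => rfl, rfl⟩, H1.continuous_toLimit hN,
      ⟨H1.toLimit_injective hN hNinter, H1.toLimit_surjective hN hNinter⟩,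
      fun _ _ hec => H1.isHomeomorph_toLimit hN hNinter hec⟩⟩

/-- Let `G` be a topological group, `A` a profinite `G`-group and
`{N_r}_{r∈R}` a family of closed characteristic subgroups of `A` with `⋂ N_r = 1`
and `N_r ⊆ N_t` for `r ≥ t`; put `A_r = A/N_r` (quotient topology, induced group
structure and `G`-action).  Then each `A_r` is a profinite `G`-group, the natural
map `A → lim_r A_r` is an isomorphism of topological groups commuting with the
`G`-actions, and `Θ : H¹_cts(G,A)_po → lim_r H¹_cts(G,A_r)_po` is a continuous
bijection, a homeomorphism when `G` is compact Hausdorff and `A` is evenly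
continuous with respect to `G`. -/
theorem stmt_13
    {G : Type} [Group G] [TopologicalSpace G] [IsTopologicalGroup G]
    {A : Type} [Group A] [TopologicalSpace A] [IsTopologicalGroup A]
    [CompactSpace A] [T2Space A] [TotallyDisconnectedSpace A]
    (ac : G → A → A)
    (hac : Continuous fun p : G × A => ac p.1 p.2)
    (hone : ∀ x : A, ac 1 x = x)
    (hcomp : ∀ (s t : G) (x : A), ac (s * t) x = ac s (ac t x))
    (hdist : ∀ (s : G) (x y : A), ac s (x * y) = ac s x * ac s y)
    {R : Type} [PartialOrder R] [IsDirected R (· ≤ ·)]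
    (N : R → Subgroup A)
    (hNclosed : ∀ r, IsClosed (N r : Set A))
    (hNchar : ∀ r (ψ : A ≃* A), Continuous ψ → Continuous ψ.symm →
      ∀ x ∈ N r, ψ x ∈ N r)
    (hNinter : (⋂ r, (N r : Set A)) = {1})
    (hNmono : ∀ (r t : R), t ≤ r → N r ≤ N t) :
    ∃ (mul : ∀ r, A ⧸ N r → A ⧸ N r → A ⧸ N r)
      (inv : ∀ r, A ⧸ N r → A ⧸ N r)
      (acq : ∀ r, G → A ⧸ N r → A ⧸ N r),
      -- the quotient structure is the one induced from `A`
      (∀ r (x y : A), mul r (QuotientGroup.mk x) (QuotientGroup.mk y) =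
        QuotientGroup.mk (x * y)) ∧
      (∀ r (x : A), inv r (QuotientGroup.mk x) = QuotientGroup.mk x⁻¹) ∧
      (∀ r (s : G) (x : A), acq r s (QuotientGroup.mk x) =
        QuotientGroup.mk (ac s x)) ∧
      -- each `A_r = A/N_r` is a profinite `G`-group
      (∀ r, CompactSpace (A ⧸ N r) ∧ T2Space (A ⧸ N r) ∧
        TotallyDisconnectedSpace (A ⧸ N r) ∧
        Continuous (fun p : (A ⧸ N r) × (A ⧸ N r) => mul r p.1 p.2) ∧
        Continuous (inv r) ∧
        Continuous (fun p : G × (A ⧸ N r) => acq r p.1 p.2) ∧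
        (∀ (s : G) (x y : A ⧸ N r), acq r s (mul r x y) =
          mul r (acq r s x) (acq r s y)) ∧
        (∀ x : A ⧸ N r, acq r 1 x = x) ∧
        (∀ (s t : G) (x : A ⧸ N r), acq r (s * t) x = acq r s (acq r t x))) ∧
      -- the natural map `A → lim_r A_r` is an isomorphism of topological groups
      -- commuting with the `G`-actions
      (∃ Φ : A → {h : ∀ r, A ⧸ N r // ∀ (r t : R) (hle : t ≤ r) (x : A),
            h r = QuotientGroup.mk x → h t = QuotientGroup.mk x},
        (∀ (x : A) (r : R), (Φ x).val r = QuotientGroup.mk x) ∧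
        Function.Bijective Φ ∧ IsHomeomorph Φ ∧
        (∀ (x y : A) (r : R), (Φ (x * y)).val r =
          mul r ((Φ x).val r) ((Φ y).val r)) ∧
        (∀ (s : G) (x : A) (r : R), (Φ (ac s x)).val r = acq r s ((Φ x).val r))) ∧
      -- the induced map `Θ : H¹_cts(G,A)_po → lim_r H¹_cts(G,A_r)_po`
      (∃ Θ : Quot (Cohomologous ac) →
          {h : ∀ r, Quot (Cohq (mul r) (inv r) (acq r)) //
            ∀ (r t : R) (hle : t ≤ r) (b : Z1q (mul r) (acq r)),
              h r = Quot.mk _ b →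
              ∃ c : Z1q (mul t) (acq t),
                (∀ (s : G) (x : A), b.val s = QuotientGroup.mk x →
                  c.val s = QuotientGroup.mk x) ∧
                h t = Quot.mk _ c},
        -- `Θ` is given by `[a] ↦ ([φ_r ∘ a])_r`
        (∀ (a : Z1cts ac) (r : R), ∃ c : Z1q (mul r) (acq r),
          (∀ s : G, c.val s = QuotientGroup.mk (a.val s)) ∧
          (Θ (Quot.mk _ a)).val r = Quot.mk _ c) ∧
        Continuous Θ ∧
        Function.Bijective Θ ∧
        (CompactSpace G → T2Space G →
          EvenlyContinuousSet {f : G → A | Continuous f} → IsHomeomorph Θ)) :=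
  stmt_13_general ac hac hone hcomp hdist N hNclosed hNchar hNinter hNmono
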